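/- arXiv:1109.1169 — 2 statements merged into one kernel-verified Lean document; each statement's English description precedes it below -/
import Mathlib

section
/- The coefficients c_{ij} = c_{ij}(n,α,β) satisfy the recurrence A(i) c_{i+1,j} = (i-j)(2i+2j-2n-α+β) c_{ij} + B(j) c_{i,j-1} + A(j) c_{i,j+1} - B(i) c_{i-1,j} for 0 ≤ i ≤ n-1 and 0 ≤ j ≤ n, where A(h) = (h-n)(h+β+1), B(h) = h(h-n-α-1), and c_{ij} := 0 when i or j lies outside {0,...,n}. -/
open Finset

/-- Pochhammer symbol `(c)_k = c (c+1) ⋯ (c+k-1)`. -/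
noncomputable def poch (c : ℝ) (k : ℕ) : ℝ := ∏ j ∈ Finset.range k, (c + j)

/-- Bernstein polynomial `B^n_i(x)`. -/
noncomputable def bern (n i : ℕ) (x : ℝ) : ℝ := (n.choose i : ℝ) * x ^ i * (1 - x) ^ (n - i)

/-- Jacobi inner product on [0,1]. -/
noncomputable def jip (α β : ℝ) (f g : ℝ → ℝ) : ℝ :=
  ∫ x in (0:ℝ)..1, (1 - x) ^ α * x ^ β * f x * g x

/-- Beta function `B(a,b) = Γ(a)Γ(b)/Γ(a+b)`. -/
noncomputable def betaF (a b : ℝ) : ℝ := Real.Gamma a * Real.Gamma b / Real.Gamma (a + b)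

/-- Hahn polynomial `Q_m(x; α, β, N)` as a terminating ₃F₂ sum. -/
noncomputable def hahn (m : ℕ) (x : ℝ) (α β : ℝ) (N : ℕ) : ℝ :=
  ∑ k ∈ Finset.range (m + 1),
    poch (-(m : ℝ)) k * poch ((m : ℝ) + α + β + 1) k * poch (-x) k /
      ((k.factorial : ℝ) * poch (α + 1) k * poch (-(N : ℝ)) k)

/-- Shifted Jacobi polynomial `R_m^{(α,β)}(x)`. -/
noncomputable def sjac (m : ℕ) (α β : ℝ) (x : ℝ) : ℝ :=
  (poch (α + 1) m / (m.factorial : ℝ)) *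
    ∑ k ∈ Finset.range (m + 1),
      poch (-(m : ℝ)) k * poch ((m : ℝ) + α + β + 1) k /
        ((k.factorial : ℝ) * poch (α + 1) k) * (1 - x) ^ k

/-- The Bézier coefficient `c_{ij}(n,α,β)` of the dual Bernstein polynomial. -/
noncomputable def cCoef (n : ℕ) (α β : ℝ) (i j : ℕ) : ℝ :=
  (1 / betaF (α + 1) (β + 1)) *
    ∑ m ∈ Finset.range (n + 1),
      (2 * m / (α + β + 1) + 1) * poch (β + 1) m * poch (α + β + 1) m /
          ((m.factorial : ℝ) * poch (α + 1) m) *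
        hahn m (i : ℝ) β α n * hahn m (j : ℝ) β α n

/-- Extension of `cCoef` by zero outside `{0,…,n} × {0,…,n}`. -/
noncomputable def cExt (n : ℕ) (α β : ℝ) (i j : ℤ) : ℝ :=
  if 0 ≤ i ∧ i ≤ (n : ℤ) ∧ 0 ≤ j ∧ j ≤ (n : ℤ) then cCoef n α β i.toNat j.toNat else 0

/-!
Both sides of the recurrence come from the Hahn difference operator
`L f(x) = A(x) (f(x+1) - f(x)) + B(x) (f(x-1) - f(x))` with `A(x) = (x-n)(x+β+1)` and
`B(x) = x(x-n-α-1)`. Each Hahn polynomial `Q_m(x; β, α, n)` is an eigenfunction of `L`, with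
eigenvalue `m(m+α+β+1)`, so for any weights the kernel `Σ_m w_m Q_m(x) Q_m(y)` satisfies
`L_x K = L_y K`. Evaluated at `(i, j)` this is the recurrence, since
`(A + B)(i) - (A + B)(j) = (i-j)(2i+2j-2n-α+β)`. The zero extension is harmless because
`B(0) = 0` and `A(n) = 0`.
-/

lemma poch_succ (c : ℝ) (k : ℕ) : poch c (k + 1) = poch c k * (c + k) :=
  prod_range_succ _ _

lemma poch_succ' (c : ℝ) (k : ℕ) : poch c (k + 1) = c * poch (c + 1) k := by
  simp only [poch, prod_range_succ', Nat.cast_zero, add_zero, Nat.cast_succ, add_assoc,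
    add_comm (1 : ℝ), mul_comm c]

lemma poch_pos {c : ℝ} (hc : 0 < c) (k : ℕ) : 0 < poch c k :=
  prod_pos fun j _ => by positivity

lemma poch_neg_natCast_ne_zero {N k : ℕ} (hk : k ≤ N) : poch (-(N : ℝ)) k ≠ 0 :=
  prod_ne_zero_iff.mpr fun j hj => by
    have : (j : ℝ) < N := by exact_mod_cast (mem_range.mp hj).trans_le hk
    linarith

noncomputable def hahnOp (N : ℕ) (α β : ℝ) (f : ℝ → ℝ) (x : ℝ) : ℝ :=
  (x - N) * (x + α + 1) * (f (x + 1) - f x) + x * (x - N - β - 1) * (f (x - 1) - f x)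

section hahnOp

variable (N : ℕ) (α β : ℝ)

lemma hahnOp_const (c x : ℝ) : hahnOp N α β (fun _ => c) x = 0 := by
  simp [hahnOp]

lemma hahnOp_sum {ι : Type*} (s : Finset ι) (c : ι → ℝ) (f : ι → ℝ → ℝ) (x : ℝ) :
    hahnOp N α β (fun x => ∑ k ∈ s, c k * f k x) x = ∑ k ∈ s, c k * hahnOp N α β (f k) x := by
  simp only [hahnOp, ← sum_sub_distrib, mul_sum, ← sum_add_distrib]
  exact sum_congr rfl fun _ _ => by ring

lemma hahnOp_poch_neg_succ (k : ℕ) (x : ℝ) :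
    hahnOp N α β (fun x => poch (-x) (k + 1)) x =
      (k + 1) * (k + α + β + 2) * poch (-x) (k + 1) -
        (k + 1) * (k - N) * (k + α + 1) * poch (-x) k := by
  have hup : poch (-(x + 1)) (k + 1) = -(x + 1) * poch (-x) k := by
    rw [poch_succ', show -(x + 1) + 1 = -x by ring]
  have hdown : x * poch (-(x - 1)) (k + 1) = -(poch (-x) (k + 1) * (-x + 1 + k)) := by
    have hshift := poch_succ' (-x) k
    rw [show -x + 1 = -(x - 1) by ring] at hshift
    linear_combination x * poch_succ (-(x - 1)) k + (-x + 1 + k) * hshift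
  simp only [poch_succ (-x) k] at hdown
  simp only [hahnOp, hup, poch_succ (-x) k]
  linear_combination (x - N - β - 1) * hdown

end hahnOp

noncomputable def hahnCoeff (m : ℕ) (α β : ℝ) (N k : ℕ) : ℝ :=
  poch (-(m : ℝ)) k * poch ((m : ℝ) + α + β + 1) k /
    ((k.factorial : ℝ) * poch (α + 1) k * poch (-(N : ℝ)) k)

lemma hahn_eq_sum_hahnCoeff (m : ℕ) (x α β : ℝ) (N : ℕ) :
    hahn m x α β N = ∑ k ∈ range (m + 1), hahnCoeff m α β N k * poch (-x) k :=
  sum_congr rfl fun _ _ => mul_div_right_comm _ _ _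

lemma hahnCoeff_succ_mul {α : ℝ} (hα : -1 < α) (β : ℝ) {m N k : ℕ} (hk : k < N) :
    hahnCoeff m α β N (k + 1) * ((k + 1) * (k - N) * (k + α + 1)) =
      hahnCoeff m α β N k * ((k - m) * (k + m + α + β + 1)) := by
  have hfac : (k.factorial : ℝ) ≠ 0 := by positivity
  have hα' : poch (α + 1) k ≠ 0 := (poch_pos (by linarith) k).ne'
  have hN : poch (-(N : ℝ)) k ≠ 0 := poch_neg_natCast_ne_zero hk.le
  have hkα : α + 1 + k ≠ 0 := by
    have : (0 : ℝ) ≤ k := k.cast_nonneg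
    linarith
  have hkN : -(N : ℝ) + k ≠ 0 := by
    have : (k : ℝ) < N := by exact_mod_cast hk
    linarith
  simp only [hahnCoeff, poch_succ, Nat.factorial_succ]
  push_cast
  field_simp
  ring

lemma hahnOp_hahn {α : ℝ} (hα : -1 < α) (β : ℝ) {m N : ℕ} (hm : m ≤ N) (x : ℝ) :
    hahnOp N α β (fun x => hahn m x α β N) x = m * (m + α + β + 1) * hahn m x α β N := by
  set a := hahnCoeff m α β N
  set P : ℕ → ℝ := fun k => poch (-x) k
  set f : ℕ → ℝ := fun k => a k * (k * (k + α + β + 1) * P k)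
  -- the degree-lowering part of `L (-x)_{k+1}` cancels the eigenvalue defect
  -- `k(k+α+β+1) - m(m+α+β+1)` of the `k`-th term
  have hterm : ∀ k ∈ range m, a (k + 1) * hahnOp N α β (fun x => poch (-x) (k + 1)) x =
      f (k + 1) - f k + m * (m + α + β + 1) * (a k * P k) := by
    intro k hk
    have hratio := hahnCoeff_succ_mul hα β (N := N) (m := m) ((mem_range.mp hk).trans_le hm)
    rw [hahnOp_poch_neg_succ]
    simp only [f, P]
    push_cast
    linear_combination (-poch (-x) k) * hratio
  have hconst : hahnOp N α β (fun x => poch (-x) 0) x = 0 := hahnOp_const N α β 1 x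
  simp only [hahn_eq_sum_hahnCoeff, hahnOp_sum]
  rw [sum_range_succ', sum_congr rfl hterm, sum_add_distrib, sum_range_sub, sum_range_succ, hconst,
    ← mul_sum]
  simp only [f, P]
  push_cast
  ring

noncomputable def hahnKernel (N : ℕ) (α β : ℝ) (w : ℕ → ℝ) (x y : ℝ) : ℝ :=
  ∑ m ∈ range (N + 1), w m * hahn m x α β N * hahn m y α β N

lemma hahnOp_hahnKernel_comm {α : ℝ} (hα : -1 < α) (β : ℝ) (N : ℕ) (w : ℕ → ℝ) (x y : ℝ) :
    hahnOp N α β (fun x => hahnKernel N α β w x y) x =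
      hahnOp N α β (fun y => hahnKernel N α β w x y) y := by
  simp only [hahnOp, hahnKernel, ← sum_sub_distrib, mul_sum, ← sum_add_distrib]
  refine sum_congr rfl fun m hm => ?_
  have hmN : m ≤ N := Nat.lt_succ_iff.mp (mem_range.mp hm)
  have hx := hahnOp_hahn hα β hmN x
  have hy := hahnOp_hahn hα β hmN y
  simp only [hahnOp] at hx hy
  linear_combination (w m * hahn m y α β N) * hx - (w m * hahn m x α β N) * hy

noncomputable def cWeight (α β : ℝ) (m : ℕ) : ℝ :=
  1 / betaF (α + 1) (β + 1) *
    ((2 * m / (α + β + 1) + 1) * poch (β + 1) m * poch (α + β + 1) m /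
      ((m.factorial : ℝ) * poch (α + 1) m))

section cExt

variable {n : ℕ} {α β : ℝ}

lemma cExt_eq_hahnKernel {i j : ℤ} (h : 0 ≤ i ∧ i ≤ n ∧ 0 ≤ j ∧ j ≤ n) :
    cExt n α β i j = hahnKernel n β α (cWeight α β) i j := by
  rw [cExt, if_pos h]
  obtain ⟨hi, -, hj, -⟩ := h
  lift i to ℕ using hi
  lift j to ℕ using hj
  simp only [cCoef, hahnKernel, cWeight, mul_sum, Int.toNat_natCast, Int.cast_natCast, mul_assoc]

lemma mul_cExt_eq_mul_hahnKernel {c : ℝ} {i j : ℤ}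
    (h : (0 ≤ i ∧ i ≤ n ∧ 0 ≤ j ∧ j ≤ n) ∨ c = 0) :
    c * cExt n α β i j = c * hahnKernel n β α (cWeight α β) i j := by
  rcases h with h | rfl
  · rw [cExt_eq_hahnKernel h]
  · simp

end cExt

theorem bezier_coefficients_recurrence_general (α β : ℝ) (hβ : β > -1)
    (n : ℕ) (i j : ℤ) (hi0 : 0 ≤ i) (hi : i ≤ (n : ℤ) - 1) (hj0 : 0 ≤ j) (hj : j ≤ (n : ℤ)) :
    (((i : ℝ) - n) * ((i : ℝ) + β + 1)) * cExt n α β (i + 1) j =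
      ((i : ℝ) - (j : ℝ)) * (2 * (i : ℝ) + 2 * (j : ℝ) - 2 * n - α + β) * cExt n α β i j +
        ((j : ℝ) * ((j : ℝ) - n - α - 1)) * cExt n α β i (j - 1) +
        (((j : ℝ) - n) * ((j : ℝ) + β + 1)) * cExt n α β i (j + 1) -
        ((i : ℝ) * ((i : ℝ) - n - α - 1)) * cExt n α β (i - 1) j := by
  have hlow_i : (0 ≤ i - 1 ∧ i - 1 ≤ n ∧ 0 ≤ j ∧ j ≤ n) ∨ (i : ℝ) * (i - n - α - 1) = 0 := by
    rcases hi0.eq_or_lt with h | h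
    · simp [← h]
    · exact .inl ⟨by omega, by omega, hj0, hj⟩
  have hlow_j : (0 ≤ i ∧ i ≤ n ∧ 0 ≤ j - 1 ∧ j - 1 ≤ n) ∨ (j : ℝ) * (j - n - α - 1) = 0 := by
    rcases hj0.eq_or_lt with h | h
    · simp [← h]
    · exact .inl ⟨hi0, by omega, by omega, by omega⟩
  have hup_j : (0 ≤ i ∧ i ≤ n ∧ 0 ≤ j + 1 ∧ j + 1 ≤ n) ∨ ((j : ℝ) - n) * (j + β + 1) = 0 := by
    rcases hj.lt_or_eq with h | h
    · exact .inl ⟨hi0, by omega, by omega, by omega⟩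
    · simp [h]
  have hsymm := hahnOp_hahnKernel_comm hβ α n (cWeight α β) i j
  simp only [hahnOp] at hsymm
  rw [cExt_eq_hahnKernel ⟨by omega, by omega, hj0, hj⟩, cExt_eq_hahnKernel ⟨hi0, by omega, hj0, hj⟩,
    mul_cExt_eq_mul_hahnKernel hlow_i, mul_cExt_eq_mul_hahnKernel hlow_j,
    mul_cExt_eq_mul_hahnKernel hup_j]
  push_cast
  linear_combination hsymm

theorem bezier_coefficients_recurrence (α β : ℝ) (hα : α > -1) (hβ : β > -1)
    (n : ℕ) (i j : ℤ) (hi0 : 0 ≤ i) (hi : i ≤ (n : ℤ) - 1) (hj0 : 0 ≤ j) (hj : j ≤ (n : ℤ)) :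
    (((i : ℝ) - n) * ((i : ℝ) + β + 1)) * cExt n α β (i + 1) j =
      ((i : ℝ) - (j : ℝ)) * (2 * (i : ℝ) + 2 * (j : ℝ) - 2 * n - α + β) * cExt n α β i j +
        ((j : ℝ) * ((j : ℝ) - n - α - 1)) * cExt n α β i (j - 1) +
        (((j : ℝ) - n) * ((j : ℝ) + β + 1)) * cExt n α β i (j + 1) -
        ((i : ℝ) * ((i : ℝ) - n - α - 1)) * cExt n α β (i - 1) j :=
  bezier_coefficients_recurrence_general α β hβ n i j hi0 hi hj0 hj
end

section
/- For k ≤ i ≤ n-l, the constrained dual Bernstein polynomial has the Bézier representation D^{(n,k,l)}_i(x; α, β) = Σ_{j=k}^{n-l} C_{ij} B^n_j(x), where C_{ij} = U_i U_j c_{i-k, j-k}(n-k-l, α+2l, β+2k) and U_r = C(n-k-l, r-k)/C(n, r). -/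
open Finset

/-!
Write `n = k + l + M`. Since `x^k (1-x)^l B^M_s = C(M, s) / C(n, k+s) · B^n_{k+s}`, multiplying
by `x^k (1-x)^l` turns the Jacobi product with weight `(α + 2l, β + 2k)` against `B^M_s` into
the product with weight `(α, β)` against `B^n_{k+s}`, up to the factor `C(n, k+s) / C(M, s)`.
Hence `U_i x^k (1-x)^l D^M_{i-k}(x; α+2l, β+2k)` satisfies the duality relations defining
`D^{(n,k,l)}_i`, and its Bézier coefficients are the `C_ij`. It is the only such polynomial: the
difference of two of them is `x^k (1-x)^l P` with `deg P ≤ M` and `P` orthogonal to every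
`B^M_s`, hence to itself, so `P = 0`.
-/

open MeasureTheory Polynomial

section Bernstein

lemma bern_eq_eval_bernsteinPolynomial (n i : ℕ) (x : ℝ) :
    bern n i x = (bernsteinPolynomial ℝ n i).eval x := by
  simp [bern, bernsteinPolynomial]

lemma continuous_bern (n i : ℕ) : Continuous (bern n i) := by
  unfold bern; fun_prop

lemma natDegree_bernsteinPolynomial_le (R : Type*) [CommRing R] (n i : ℕ) :
    (bernsteinPolynomial R n i).natDegree ≤ n := by
  rcases lt_or_ge n i with hn | hi
  · simp [bernsteinPolynomial.eq_zero_of_lt R hn]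
  unfold bernsteinPolynomial
  compute_degree
  omega

lemma natDegree_sum_C_mul_bernsteinPolynomial_le (R : Type*) [CommRing R] (M : ℕ) (d : ℕ → R) :
    (∑ s ∈ range (M + 1), C (d s) * bernsteinPolynomial R M s).natDegree ≤ M :=
  natDegree_sum_le_of_forall_le _ _ fun s _ =>
    (natDegree_C_mul_le _ _).trans (natDegree_bernsteinPolynomial_le R M s)

lemma pow_mul_one_sub_pow_mul_bern (k l M s : ℕ) (hs : s ≤ M) (x : ℝ) :
    x ^ k * (1 - x) ^ l * bern M s x
      = (M.choose s / (k + l + M).choose (k + s) : ℝ) * bern (k + l + M) (k + s) x := by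
  have : ((k + l + M).choose (k + s) : ℝ) ≠ 0 := mod_cast (Nat.choose_pos (by omega)).ne'
  unfold bern
  rw [show k + l + M - (k + s) = (M - s) + l by omega, pow_add, pow_add]
  field_simp

lemma pow_mul_one_sub_pow_mul_sum_bern (k l M : ℕ) (d : ℕ → ℝ) (x : ℝ) :
    x ^ k * (1 - x) ^ l * ∑ s ∈ range (M + 1), d s * bern M s x
      = ∑ j ∈ Icc k (k + M), (M.choose (j - k) / (k + l + M).choose j : ℝ) * d (j - k) *
          bern (k + l + M) j x := by
  rw [mul_sum, ← Ico_add_one_right_eq_Icc, sum_Ico_eq_sum_range,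
    show k + M + 1 - k = M + 1 by omega]
  refine sum_congr rfl fun s hs => ?_
  simp only [Nat.add_sub_cancel_left]
  rw [mul_right_comm _ (d s),
    ← pow_mul_one_sub_pow_mul_bern k l M s (by simpa [Nat.lt_succ_iff] using hs)]
  ring

lemma pow_eq_sum_bern (M t : ℕ) (ht : t ≤ M) (x : ℝ) :
    x ^ t = ∑ u ∈ range (M - t + 1),
      ((M - t).choose u / M.choose (t + u) : ℝ) * bern M (t + u) x := by
  have hbinom := add_pow x (1 - x) (M - t)
  rw [add_sub_cancel, one_pow] at hbinom
  calc x ^ t = x ^ t * 1 := (mul_one _).symm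
    _ = _ := by
      rw [hbinom, mul_sum]
      refine sum_congr rfl fun u hu => ?_
      have hu : u ≤ M - t := Nat.lt_succ_iff.mp (mem_range.mp hu)
      have : (M.choose (t + u) : ℝ) ≠ 0 := mod_cast (Nat.choose_pos (by omega)).ne'
      unfold bern
      rw [show M - (t + u) = M - t - u by omega, pow_add]
      field_simp

end Bernstein

lemma Real.rpow_add_two_mul_natCast {x y : ℝ} (hx : 0 ≤ x) (hy : -1 < y) (m : ℕ) :
    x ^ (y + 2 * (m : ℝ)) = x ^ y * x ^ (2 * m) := by
  rcases Nat.eq_zero_or_pos m with rfl | hm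
  · simp
  have hm' : (1 : ℝ) ≤ m := mod_cast hm
  rw [show y + 2 * (m : ℝ) = y + ((2 * m : ℕ) : ℝ) by push_cast; ring,
    Real.rpow_add_natCast' hx (by push_cast; linarith)]

section JacobiInnerProduct

variable {a b : ℝ}

lemma intervalIntegrable_jip_integrand (ha : -1 < a) (hb : -1 < b) {f g : ℝ → ℝ}
    (hf : Continuous f) (hg : Continuous g) :
    IntervalIntegrable (fun x => (1 - x) ^ a * x ^ b * f x * g x) volume 0 1 := by
  have hfg : Continuous fun x => f x * g x := hf.mul hg
  simp_rw [mul_assoc _ (f _)]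
  -- the singularity `x ^ b` sits at `0` and `(1 - x) ^ a` at `1`: split at `1/2`
  refine IntervalIntegrable.trans (b := 1 / 2) ?_ ?_
  · have hcont : ContinuousOn (fun x : ℝ => (1 - x) ^ a * (f x * g x)) (Set.uIcc 0 (1 / 2)) := by
      refine ContinuousOn.mul (ContinuousOn.rpow_const (by fun_prop) fun x hx => ?_)
        hfg.continuousOn
      rw [Set.uIcc_of_le (by norm_num)] at hx
      exact Or.inl (by linarith [hx.2])
    simpa only [mul_comm, mul_left_comm, mul_assoc] using
      (intervalIntegral.intervalIntegrable_rpow' hb).mul_continuousOn hcont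
  · have hcont : ContinuousOn (fun x : ℝ => x ^ b * (f x * g x)) (Set.uIcc (1 / 2) 1) := by
      refine ContinuousOn.mul (ContinuousOn.rpow_const continuousOn_id fun x hx => ?_)
        hfg.continuousOn
      rw [Set.uIcc_of_le (by norm_num)] at hx
      exact Or.inl (by linarith [hx.1] : x ≠ 0)
    have hsing : IntervalIntegrable (fun x : ℝ => (1 - x) ^ a) volume (1 / 2) 1 := by
      convert ((intervalIntegral.intervalIntegrable_rpow' ha (a := 0) (b := 1 / 2)).comp_sub_left
        1).symm using 1 <;> norm_num
    simpa only [mul_assoc] using hsing.mul_continuousOn hcont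

lemma jip_sub_left (ha : -1 < a) (hb : -1 < b) {f₁ f₂ g : ℝ → ℝ} (hf₁ : Continuous f₁)
    (hf₂ : Continuous f₂) (hg : Continuous g) :
    jip a b (fun x => f₁ x - f₂ x) g = jip a b f₁ g - jip a b f₂ g := by
  unfold jip
  rw [← intervalIntegral.integral_sub (intervalIntegrable_jip_integrand ha hb hf₁ hg)
    (intervalIntegrable_jip_integrand ha hb hf₂ hg)]
  congr 1 with x
  ring

lemma jip_sum_mul_right {ι : Type*} (ha : -1 < a) (hb : -1 < b) {f : ℝ → ℝ}
    (hf : Continuous f)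
    (S : Finset ι) (d : ι → ℝ) {g : ι → ℝ → ℝ} (hg : ∀ s, Continuous (g s)) :
    jip a b f (fun x => ∑ s ∈ S, d s * g s x) = ∑ s ∈ S, d s * jip a b f (g s) := by
  unfold jip
  simp_rw [← intervalIntegral.integral_const_mul]
  rw [← intervalIntegral.integral_finsetSum fun s _ =>
    (intervalIntegrable_jip_integrand ha hb hf (hg s)).const_mul (d s)]
  congr 1 with x
  rw [mul_sum]
  exact sum_congr rfl fun s _ => by ring

lemma eq_zero_of_jip_self_eq_zero (ha : -1 < a) (hb : -1 < b) {P : ℝ[X]}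
    (h : jip a b (fun x => P.eval x) (fun x => P.eval x) = 0) : P = 0 := by
  by_contra hP
  set W : ℝ → ℝ := fun x => (1 - x) ^ a * x ^ b * P.eval x * P.eval x
  have hW : ∀ x ∈ Set.Icc (0 : ℝ) 1, W x = (1 - x) ^ a * x ^ b * (P.eval x * P.eval x) :=
    fun x _ => mul_assoc _ _ _
  have hW_nonneg : ∀ x ∈ Set.Icc (0 : ℝ) 1, 0 ≤ W x := fun x hx => by
    rw [hW x hx]
    exact mul_nonneg (mul_nonneg (Real.rpow_nonneg (by linarith [hx.2]) _)
      (Real.rpow_nonneg hx.1 _)) (mul_self_nonneg _)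
  obtain ⟨c, hc, hroot⟩ : ∃ c ∈ Set.Icc (1 / 4 : ℝ) (3 / 4), P.eval c ≠ 0 := by
    obtain ⟨c, hc, hc'⟩ :=
      (Set.Icc_infinite (by norm_num : (1 / 4 : ℝ) < 3 / 4)).exists_notMem_finset P.roots.toFinset
    exact ⟨c, hc, by simpa [hP] using hc'⟩
  have hsub : Set.Icc (1 / 4 : ℝ) (3 / 4) ⊆ Set.Icc 0 1 :=
    Set.Icc_subset_Icc (by norm_num) (by norm_num)
  have hW_cont : ContinuousOn W (Set.Icc (1 / 4) (3 / 4)) := by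
    refine ContinuousOn.mul (ContinuousOn.mul (ContinuousOn.mul ?_ ?_) (by fun_prop)) (by fun_prop)
    · exact ContinuousOn.rpow_const (by fun_prop) fun x hx => Or.inl (by linarith [hx.2])
    · exact ContinuousOn.rpow_const (by fun_prop) fun x hx => Or.inl (by linarith [hx.1])
  have hpos : 0 < ∫ x in (1 / 4 : ℝ)..(3 / 4), W x := by
    refine intervalIntegral.integral_pos (by norm_num) hW_cont
      (fun x hx => hW_nonneg x (hsub (Set.Ioc_subset_Icc_self hx))) ⟨c, hc, ?_⟩
    rw [hW c (hsub hc)]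
    exact mul_pos (mul_pos (Real.rpow_pos_of_pos (by linarith [hc.2]) _)
      (Real.rpow_pos_of_pos (by linarith [hc.1]) _)) (mul_self_pos.mpr hroot)
  have hmono : ∫ x in (1 / 4 : ℝ)..(3 / 4), W x ≤ ∫ x in (0 : ℝ)..1, W x :=
    intervalIntegral.integral_mono_interval (by norm_num) (by norm_num) (by norm_num)
      ((ae_restrict_iff' measurableSet_Ioc).mpr
        (ae_of_all _ fun x hx => hW_nonneg x (Set.Ioc_subset_Icc_self hx)))
      (intervalIntegrable_jip_integrand ha hb P.continuous P.continuous)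
  exact absurd h (by unfold jip; linarith)

lemma jip_const_mul_left (u : ℝ) (f g : ℝ → ℝ) :
    jip a b (fun x => u * f x) g = u * jip a b f g := by
  unfold jip
  rw [← intervalIntegral.integral_const_mul]
  congr 1 with x
  ring

lemma jip_pow_eq_zero_of_forall_bern (ha : -1 < a) (hb : -1 < b) {f : ℝ → ℝ}
    (hf : Continuous f) {M : ℕ} (h : ∀ s ≤ M, jip a b f (bern M s) = 0) {t : ℕ}
    (ht : t ≤ M) :
    jip a b f (fun x => x ^ t) = 0 := by
  simp_rw [pow_eq_sum_bern M t ht]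
  rw [jip_sum_mul_right ha hb hf _ _ fun u => continuous_bern M (t + u)]
  refine sum_eq_zero fun u hu => ?_
  rw [h (t + u) (by have := mem_range.mp hu; omega), mul_zero]

lemma jip_eval_eq_zero_of_forall_bern (ha : -1 < a) (hb : -1 < b) {f : ℝ → ℝ}
    (hf : Continuous f) {M : ℕ} (h : ∀ s ≤ M, jip a b f (bern M s) = 0) {Q : ℝ[X]}
    (hQ : Q.natDegree ≤ M) :
    jip a b f (fun x => Q.eval x) = 0 := by
  simp_rw [eval_eq_sum_range' (Nat.lt_succ_of_le hQ)]
  rw [jip_sum_mul_right ha hb hf _ _ fun t => continuous_pow t]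
  refine sum_eq_zero fun t ht => ?_
  rw [jip_pow_eq_zero_of_forall_bern ha hb hf h (Nat.lt_succ_iff.mp (mem_range.mp ht)), mul_zero]

lemma eq_zero_of_forall_jip_bern_eq_zero (ha : -1 < a) (hb : -1 < b) {M : ℕ} {P : ℝ[X]}
    (hP : P.natDegree ≤ M) (h : ∀ s ≤ M, jip a b (fun x => P.eval x) (bern M s) = 0) :
    P = 0 :=
  eq_zero_of_jip_self_eq_zero ha hb (jip_eval_eq_zero_of_forall_bern ha hb P.continuous h hP)

lemma jip_pow_mul_one_sub_pow_mul_left (ha : -1 < a) (hb : -1 < b) (k l M : ℕ) {s : ℕ}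
    (hs : s ≤ M) (f : ℝ → ℝ) :
    jip a b (fun x => x ^ k * (1 - x) ^ l * f x) (bern (k + l + M) (k + s))
      = ((k + l + M).choose (k + s) / M.choose s : ℝ) *
          jip (a + 2 * l) (b + 2 * k) f (bern M s) := by
  have hM : (M.choose s : ℝ) ≠ 0 := mod_cast (Nat.choose_pos hs).ne'
  have hn : ((k + l + M).choose (k + s) : ℝ) ≠ 0 := mod_cast (Nat.choose_pos (by omega)).ne'
  unfold jip
  rw [← intervalIntegral.integral_const_mul]
  refine intervalIntegral.integral_congr fun x hx => ?_
  rw [Set.uIcc_of_le zero_le_one] at hx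
  have hbern : bern (k + l + M) (k + s) x * M.choose s
      = (k + l + M).choose (k + s) * (x ^ k * (1 - x) ^ l * bern M s x) := by
    rw [pow_mul_one_sub_pow_mul_bern k l M s hs x]
    field_simp
  rw [Real.rpow_add_two_mul_natCast (by linarith [hx.2]) ha,
    Real.rpow_add_two_mul_natCast hx.1 hb]
  field_simp
  linear_combination (1 - x) ^ a * x ^ b * x ^ k * (1 - x) ^ l * f x * hbern

lemma jip_pow_mul_one_sub_pow_mul_left_eq_ite (ha : -1 < a) (hb : -1 < b) (k l M : ℕ) {r s : ℕ}
    (hr : r ≤ M) (hs : s ≤ M) {f : ℝ → ℝ}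
    (hf : jip (a + 2 * l) (b + 2 * k) f (bern M s) = if r = s then 1 else 0) :
    jip a b (fun x => x ^ k * (1 - x) ^ l * ((M.choose r / (k + l + M).choose (k + r) : ℝ) * f x))
      (bern (k + l + M) (k + s)) = if r = s then 1 else 0 := by
  rw [jip_pow_mul_one_sub_pow_mul_left ha hb k l M hs, jip_const_mul_left, hf]
  rcases eq_or_ne r s with rfl | hrs
  · have : (M.choose r : ℝ) ≠ 0 := mod_cast (Nat.choose_pos hr).ne'
    have : ((k + l + M).choose (k + r) : ℝ) ≠ 0 := mod_cast (Nat.choose_pos (by omega)).ne'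
    rw [if_pos rfl]
    field_simp
  · simp [hrs]

end JacobiInnerProduct

lemma Polynomial.X_sub_C_pow_dvd_of_iterate_derivative_eval_eq_zero {R : Type*} [CommRing R]
    [IsDomain R] [CharZero R] {p : R[X]} {t : R} {k : ℕ}
    (h : ∀ r < k, (derivative^[r] p).eval t = 0) : (X - C t) ^ k ∣ p := by
  rcases eq_or_ne p 0 with rfl | hp
  · exact dvd_zero _
  rcases k with _ | k
  · simp
  exact (le_rootMultiplicity_iff hp).mp <|
    lt_rootMultiplicity_of_isRoot_iterate_derivative hp fun r hr => h r (Nat.lt_succ_of_le hr)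

lemma X_pow_mul_one_sub_X_pow_dvd_of_iterate_derivative_eval {R : Type*} [CommRing R]
    [IsDomain R] [CharZero R] {p : R[X]} {k l : ℕ}
    (h0 : ∀ r < k, (derivative^[r] p).eval 0 = 0)
    (h1 : ∀ r < l, (derivative^[r] p).eval 1 = 0) :
    X ^ k * (1 - X) ^ l ∣ p := by
  have hcop : IsCoprime (X ^ k : R[X]) ((1 - X) ^ l) := IsCoprime.pow ⟨1, 1, by ring⟩
  refine hcop.mul_dvd ?_ ?_
  · simpa using X_sub_C_pow_dvd_of_iterate_derivative_eval_eq_zero h0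
  · refine dvd_trans (pow_dvd_pow_of_dvd ⟨-1, ?_⟩ l)
      (X_sub_C_pow_dvd_of_iterate_derivative_eval_eq_zero h1)
    simp only [map_one]
    ring

lemma natDegree_le_of_natDegree_X_pow_mul_one_sub_X_pow_mul_le {R : Type*} [CommRing R]
    [IsDomain R] {k l M : ℕ} {P : R[X]}
    (h : (X ^ k * (1 - X) ^ l * P).natDegree ≤ k + l + M) : P.natDegree ≤ M := by
  rcases eq_or_ne P 0 with rfl | hP
  · simp
  have h1X : (1 - X : R[X]) ≠ 0 := fun h => by simpa using congrArg (eval 0) h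
  have hdeg1X : (1 - X : R[X]).natDegree = 1 := by
    rw [← neg_sub, natDegree_neg, ← C_1, natDegree_X_sub_C]
  rw [natDegree_mul (mul_ne_zero (pow_ne_zero _ X_ne_zero) (pow_ne_zero _ h1X)) hP,
    natDegree_mul (pow_ne_zero _ X_ne_zero) (pow_ne_zero _ h1X), natDegree_X_pow,
    natDegree_pow, hdeg1X] at h
  omega

lemma eq_zero_of_forall_jip_bern_of_X_pow_mul_one_sub_X_pow_dvd {a b : ℝ} (ha : -1 < a)
    (hb : -1 < b) {k l M : ℕ} {F : ℝ[X]} (hF : F.natDegree ≤ k + l + M)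
    (hdvd : X ^ k * (1 - X) ^ l ∣ F)
    (h : ∀ s ≤ M, jip a b (fun x => F.eval x) (bern (k + l + M) (k + s)) = 0) : F = 0 := by
  obtain ⟨P, rfl⟩ := hdvd
  suffices P = 0 by rw [this, mul_zero]
  have hshift (s : ℕ) (hs : s ≤ M) := jip_pow_mul_one_sub_pow_mul_left ha hb k l M hs
    (fun x => P.eval x)
  refine eq_zero_of_forall_jip_bern_eq_zero (a := a + 2 * l) (b := b + 2 * k)
    (by linarith [(l.cast_nonneg : (0 : ℝ) ≤ l)])
    (by linarith [(k.cast_nonneg : (0 : ℝ) ≤ k)])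
    (natDegree_le_of_natDegree_X_pow_mul_one_sub_X_pow_mul_le hF) fun s hs => ?_
  have hn : ((k + l + M).choose (k + s) / M.choose s : ℝ) ≠ 0 :=
    div_ne_zero (mod_cast (Nat.choose_pos (by omega)).ne') (mod_cast (Nat.choose_pos hs).ne')
  have := h s hs
  simp only [eval_mul, eval_pow, eval_sub, eval_one, eval_X] at this
  rwa [hshift s hs, mul_eq_zero, or_iff_right hn] at this

theorem constrained_dual_bernstein_bezier_representation_general (α β : ℝ) (hα : α > -1) (hβ : β > -1)
    (n k l i : ℕ) (hkl : k + l ≤ n) (hik : k ≤ i) (hil : i ≤ n - l)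
    (Dc : Polynomial ℝ) (hdeg : Dc.natDegree ≤ n)
    (h0 : ∀ r < k, (Polynomial.derivative^[r] Dc).eval 0 = 0)
    (h1 : ∀ r < l, (Polynomial.derivative^[r] Dc).eval 1 = 0)
    (hdual : ∀ j, k ≤ j → j ≤ n - l →
      jip α β (fun x => Dc.eval x) (bern n j) = if i = j then 1 else 0)
    (Du : ℕ → Polynomial ℝ)
    (hdualu : ∀ r ≤ n - k - l, ∀ s ≤ n - k - l,
      jip (α + 2 * l) (β + 2 * k) (fun x => (Du r).eval x) (bern (n - k - l) s) =
        if r = s then 1 else 0)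
    (c : ℕ → ℕ → ℝ)
    (hc : ∀ r ≤ n - k - l, ∀ x : ℝ,
      (Du r).eval x = ∑ s ∈ Finset.range (n - k - l + 1), c r s * bern (n - k - l) s x)
    (x : ℝ) :
    Dc.eval x =
      ∑ j ∈ Finset.Icc k (n - l),
        ((((n - k - l).choose (i - k) : ℝ)) / (n.choose i : ℝ)) *
          ((((n - k - l).choose (j - k) : ℝ)) / (n.choose j : ℝ)) *
          c (i - k) (j - k) * bern n j x := by
  obtain ⟨M, rfl⟩ : ∃ M, n = k + l + M := ⟨n - k - l, by omega⟩
  obtain ⟨r, rfl⟩ : ∃ r, i = k + r := ⟨i - k, by omega⟩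
  have hr : r ≤ M := by omega
  rw [show k + l + M - k - l = M by omega] at hdualu hc
  rw [show k + l + M - k - l = M by omega, show k + l + M - l = k + M by omega,
    Nat.add_sub_cancel_left]
  set U : ℝ := M.choose r / (k + l + M).choose (k + r)
  -- `E = U x^k (1-x)^l D_r(x; α + 2l, β + 2k)`, with `D_r` rebuilt from its Bézier form
  set Q : ℝ[X] := ∑ s ∈ range (M + 1), C (c r s) * bernsteinPolynomial ℝ M s
  have hQ (x : ℝ) : Q.eval x = (Du r).eval x := by
    simp [Q, hc r hr x, eval_finsetSum, bern_eq_eval_bernsteinPolynomial]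
  set E : ℝ[X] := X ^ k * (1 - X) ^ l * (C U * Q)
  have hE (x : ℝ) : E.eval x = x ^ k * (1 - x) ^ l * (U * (Du r).eval x) := by
    simp [E, hQ]
  have hEdeg : E.natDegree ≤ k + l + M :=
    natDegree_mul_le.trans (add_le_add (by compute_degree!)
      ((natDegree_C_mul_le _ _).trans (natDegree_sum_C_mul_bernsteinPolynomial_le ℝ M _)))
  have hEdual (s : ℕ) (hs : s ≤ M) :
      jip α β (fun x => E.eval x) (bern (k + l + M) (k + s)) =
        if k + r = k + s then 1 else 0 := by
    simp_rw [hE, Nat.add_left_cancel_iff]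
    exact jip_pow_mul_one_sub_pow_mul_left_eq_ite hα hβ k l M hr hs (hdualu r hr s hs)
  have hDc : Dc = E := by
    refine sub_eq_zero.mp (eq_zero_of_forall_jip_bern_of_X_pow_mul_one_sub_X_pow_dvd hα hβ
      ((natDegree_sub_le _ _).trans (max_le hdeg hEdeg))
      (dvd_sub (X_pow_mul_one_sub_X_pow_dvd_of_iterate_derivative_eval h0 h1) (dvd_mul_right _ _))
      fun s hs => ?_)
    simp only [eval_sub]
    rw [jip_sub_left hα hβ Dc.continuous E.continuous (continuous_bern _ _),
      hdual _ (by omega) (by omega), hEdual s hs, sub_self]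
  rw [hDc, hE, hc r hr, mul_left_comm, pow_mul_one_sub_pow_mul_sum_bern, mul_sum]
  exact sum_congr rfl fun j _ => by ring

theorem constrained_dual_bernstein_bezier_representation (α β : ℝ) (hα : α > -1) (hβ : β > -1)
    (n k l i : ℕ) (hkl : k + l ≤ n) (hik : k ≤ i) (hil : i ≤ n - l)
    (Dc : Polynomial ℝ) (hdeg : Dc.natDegree ≤ n)
    (h0 : ∀ r < k, (Polynomial.derivative^[r] Dc).eval 0 = 0)
    (h1 : ∀ r < l, (Polynomial.derivative^[r] Dc).eval 1 = 0)
    (hdual : ∀ j, k ≤ j → j ≤ n - l →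
      jip α β (fun x => Dc.eval x) (bern n j) = if i = j then 1 else 0)
    (Du : ℕ → Polynomial ℝ) (hdegu : ∀ r ≤ n - k - l, (Du r).natDegree ≤ n - k - l)
    (hdualu : ∀ r ≤ n - k - l, ∀ s ≤ n - k - l,
      jip (α + 2 * l) (β + 2 * k) (fun x => (Du r).eval x) (bern (n - k - l) s) =
        if r = s then 1 else 0)
    (c : ℕ → ℕ → ℝ)
    (hc : ∀ r ≤ n - k - l, ∀ x : ℝ,
      (Du r).eval x = ∑ s ∈ Finset.range (n - k - l + 1), c r s * bern (n - k - l) s x)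
    (x : ℝ) :
    Dc.eval x =
      ∑ j ∈ Finset.Icc k (n - l),
        ((((n - k - l).choose (i - k) : ℝ)) / (n.choose i : ℝ)) *
          ((((n - k - l).choose (j - k) : ℝ)) / (n.choose j : ℝ)) *
          c (i - k) (j - k) * bern n j x :=
  constrained_dual_bernstein_bezier_representation_general α β hα hβ n k l i hkl hik hil Dc hdeg h0
    h1 hdual Du hdualu c hc x
end
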